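/- Let θ ∈ (0, π), let C_θ = {v ∈ ℝ³ : v₃ ≥ ‖v‖·cos(θ/2)}, let p ∈ ℝ², r ≥ 0, and t > 0, and let A = {a ∈ ℝ² : ‖a − p‖ ≤ r} be the closed disk of radius r centered at p. Then the set of points q ∈ ℝ² such that some C¹ curve γ : [0, 1] → ℝ³ with γ'(s) ∈ C_θ \ {0} for all s starts at (a₁, a₂, 0) for some a ∈ A and ends at (q₁, q₂, t) is exactly the closed disk of radius r + t·tan(θ/2) centered at p. (Integration of Lemma 2.1 over a starting disk A in the page P₀: the set of points on the t-page reachable from A is a disk centered at the vertical translate of the center of A.) -/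
import Mathlib


/-- The closed solid cone of opening angle `θ` about the positive vertical
axis in `ℝ³`: `{v : v₃ ≥ ‖v‖ · cos (θ/2)}`. -/
def cone3 (θ : ℝ) : Set (EuclideanSpace ℝ (Fin 3)) :=
  {v | Real.cos (θ / 2) * ‖v‖ ≤ v 2}

/-- Projection of `ℝ³` onto the first two (horizontal) coordinates. -/
noncomputable def P12 : EuclideanSpace ℝ (Fin 3) →L[ℝ] EuclideanSpace ℝ (Fin 2) :=
  LinearMap.toContinuousLinearMap <|
    ((WithLp.linearEquiv 2 ℝ (Fin 2 → ℝ)).symm.toLinearMap.comp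
      ((LinearMap.funLeft ℝ ℝ (Fin.castSucc)).comp
        (WithLp.linearEquiv 2 ℝ (Fin 3 → ℝ)).toLinearMap))

lemma P12_apply0 (v : EuclideanSpace ℝ (Fin 3)) : P12 v 0 = v 0 := rfl
lemma P12_apply1 (v : EuclideanSpace ℝ (Fin 3)) : P12 v 1 = v 1 := rfl

/-- Embedding `ℝ² × ℝ → ℝ³`. -/
noncomputable def e3 (w : EuclideanSpace ℝ (Fin 2)) (c : ℝ) : EuclideanSpace ℝ (Fin 3) :=
  (WithLp.equiv 2 _).symm ![w 0, w 1, c]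

lemma norm3 (v : EuclideanSpace ℝ (Fin 3)) :
    ‖v‖ = Real.sqrt ((v 0)^2 + (v 1)^2 + (v 2)^2) := by
  rw [EuclideanSpace.norm_eq]
  simp [Fin.sum_univ_three, Real.norm_eq_abs, sq_abs]

lemma norm2 (w : EuclideanSpace ℝ (Fin 2)) :
    ‖w‖ = Real.sqrt ((w 0)^2 + (w 1)^2) := by
  rw [EuclideanSpace.norm_eq]
  simp [Fin.sum_univ_two, Real.norm_eq_abs, sq_abs]

lemma cone_bound (θ : ℝ) (hθ : θ ∈ Set.Ioo 0 Real.pi) (v : EuclideanSpace ℝ (Fin 3))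
    (hv : v ∈ cone3 θ) :
    0 ≤ v 2 ∧ Real.sqrt ((v 0)^2 + (v 1)^2) ≤ Real.tan (θ/2) * v 2 := by
  have hθ2 : θ/2 ∈ Set.Ioo (-(Real.pi/2)) (Real.pi/2) := by
    constructor <;> [linarith [hθ.1, Real.pi_pos]; linarith [hθ.2]]
  have hcos : 0 < Real.cos (θ/2) := Real.cos_pos_of_mem_Ioo hθ2
  have hsin : 0 < Real.sin (θ/2) := Real.sin_pos_of_pos_of_lt_pi (by linarith [hθ.1])
    (by linarith [hθ.2, Real.pi_pos])
  have hv' : Real.cos (θ/2) * ‖v‖ ≤ v 2 := hv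
  have hz : 0 ≤ v 2 := le_trans (mul_nonneg hcos.le (norm_nonneg v)) hv'
  refine ⟨hz, ?_⟩
  have hnn : (0:ℝ) ≤ (v 0)^2 + (v 1)^2 := by positivity
  have hnv : ‖v‖^2 = (v 0)^2 + (v 1)^2 + (v 2)^2 := by
    rw [norm3, Real.sq_sqrt (by positivity)]
  have hsq : (Real.cos (θ/2))^2 * ‖v‖^2 ≤ (v 2)^2 := by
    have := mul_self_le_mul_self (mul_nonneg hcos.le (norm_nonneg v)) hv'
    nlinarith [this]
  set s := Real.sqrt ((v 0)^2 + (v 1)^2) with hs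
  have hs0 : 0 ≤ s := Real.sqrt_nonneg _
  have hs2 : s^2 = (v 0)^2 + (v 1)^2 := Real.sq_sqrt hnn
  have key : (Real.cos (θ/2) * s)^2 ≤ (Real.sin (θ/2) * v 2)^2 := by
    have hsc := Real.sin_sq_add_cos_sq (θ/2)
    nlinarith [hsq, hnv, hs2]
  have key2 : Real.cos (θ/2) * s ≤ Real.sin (θ/2) * v 2 := by
    have h1 : 0 ≤ Real.cos (θ/2) * s := mul_nonneg hcos.le hs0
    have h2 : 0 ≤ Real.sin (θ/2) * v 2 := mul_nonneg hsin.le hz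
    nlinarith [key]
  rw [Real.tan_eq_sin_div_cos]
  rw [div_mul_eq_mul_div, le_div_iff₀ hcos]
  nlinarith [key2]

/-- Construction of a straight-line reaching curve. -/
lemma reach (θ : ℝ) (hθ : θ ∈ Set.Ioo 0 Real.pi) (t : ℝ) (ht : 0 < t)
    (a q : EuclideanSpace ℝ (Fin 2)) (hw : ‖q - a‖ ≤ t * Real.tan (θ/2)) :
    ∃ γ γ' : ℝ → EuclideanSpace ℝ (Fin 3),
      (∀ s ∈ Set.Icc (0:ℝ) 1, HasDerivWithinAt γ (γ' s) (Set.Icc 0 1) s) ∧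
      ContinuousOn γ' (Set.Icc 0 1) ∧
      (∀ s ∈ Set.Icc (0:ℝ) 1, γ' s ∈ cone3 θ \ {0}) ∧
      (γ 0 0 = a 0 ∧ γ 0 1 = a 1 ∧ γ 0 2 = 0) ∧
      (γ 1 0 = q 0 ∧ γ 1 1 = q 1 ∧ γ 1 2 = t) := by
  have hθ2 : θ/2 ∈ Set.Ioo (-(Real.pi/2)) (Real.pi/2) := by
    constructor <;> [linarith [hθ.1, Real.pi_pos]; linarith [hθ.2]]
  have hcos : 0 < Real.cos (θ/2) := Real.cos_pos_of_mem_Ioo hθ2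
  have hsin : 0 < Real.sin (θ/2) := Real.sin_pos_of_pos_of_lt_pi (by linarith [hθ.1])
    (by linarith [hθ.2, Real.pi_pos])
  set v : EuclideanSpace ℝ (Fin 3) := e3 (q - a) t with hv
  refine ⟨fun s => e3 a 0 + s • v, fun _ => v, ?_, continuousOn_const, ?_, ?_, ?_⟩
  · intro s _
    have : HasDerivAt (fun s : ℝ => e3 a 0 + s • v) v s := by
      simpa using ((hasDerivAt_id s).smul_const v).const_add (e3 a 0)
    exact this.hasDerivWithinAt
  · intro s _
    constructor
    · -- cone membership
      show Real.cos (θ/2) * ‖v‖ ≤ v 2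
      have hv2 : v 2 = t := rfl
      have hnqa : ‖q - a‖^2 = ((q-a) 0)^2 + ((q-a) 1)^2 := by
        rw [norm2, Real.sq_sqrt (by positivity)]
      have hnv : ‖v‖ = Real.sqrt (‖q - a‖^2 + t^2) := by
        rw [norm3, hnqa]
        congr 1
      rw [hv2, hnv]
      have h0 : 0 ≤ ‖q - a‖ := norm_nonneg _
      have hct : Real.cos (θ/2) * Real.tan (θ/2) = Real.sin (θ/2) := by
        rw [Real.tan_eq_sin_div_cos]; field_simp
      have hsc := Real.sin_sq_add_cos_sq (θ/2)
      have step1 : ‖q - a‖^2 ≤ (t * Real.tan (θ/2))^2 := by nlinarith [hw, h0]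
      have step2 : (Real.cos (θ/2))^2 * (t * Real.tan (θ/2))^2
          = t^2 * (Real.sin (θ/2))^2 := by
        have : (Real.cos (θ/2))^2 * (t * Real.tan (θ/2))^2
            = (Real.cos (θ/2) * Real.tan (θ/2))^2 * t^2 := by ring
        rw [this, hct]; ring
      have hle : (Real.cos (θ/2))^2 * (‖q - a‖^2 + t^2) ≤ t^2 := by
        nlinarith [step1, step2, hsc, sq_nonneg (Real.cos (θ/2))]
      calc Real.cos (θ/2) * Real.sqrt (‖q - a‖^2 + t^2)
          = Real.sqrt ((Real.cos (θ/2))^2 * (‖q - a‖^2 + t^2)) := by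
            rw [Real.sqrt_mul (by positivity), Real.sqrt_sq hcos.le]
        _ ≤ Real.sqrt (t^2) := Real.sqrt_le_sqrt hle
        _ = t := Real.sqrt_sq ht.le
    · -- nonzero
      intro h
      have h' : v = 0 := h
      have : v 2 = 0 := by rw [h']; rfl
      have hv2 : v 2 = t := rfl
      rw [hv2] at this; exact absurd this ht.ne'
  · refine ⟨?_, ?_, ?_⟩ <;> simp [e3]
  · have h0 : v 0 = q 0 - a 0 := rfl
    have h1 : v 1 = q 1 - a 1 := rfl
    have h2 : v 2 = t := rfl
    refine ⟨?_, ?_, ?_⟩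
    · simp only [PiLp.add_apply, PiLp.smul_apply, one_smul]
      rw [show (e3 a 0) 0 = a 0 from rfl, h0]; ring
    · simp only [PiLp.add_apply, PiLp.smul_apply, one_smul]
      rw [show (e3 a 0) 1 = a 1 from rfl, h1]; ring
    · simp only [PiLp.add_apply, PiLp.smul_apply, one_smul]
      rw [show (e3 a 0) 2 = (0:ℝ) from rfl, h2]; ring

/-- Integration of Lemma 2.1 over a starting disk `A` of radius `r` centered
at `p` in the `0`-page: the set of horizontal positions on the `t`-page
reachable from `A × {0}` by C¹ curves whose derivative lies in `C_θ \ {0}` is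
exactly the closed disk of radius `r + t · tan (θ/2)` centered at `p`. -/
theorem stmt4 (θ : ℝ) (hθ : θ ∈ Set.Ioo 0 Real.pi)
    (p : EuclideanSpace ℝ (Fin 2)) (r t : ℝ) (hr : 0 ≤ r) (ht : 0 < t) :
    {q : EuclideanSpace ℝ (Fin 2) |
      ∃ a ∈ Metric.closedBall p r,
      ∃ γ γ' : ℝ → EuclideanSpace ℝ (Fin 3),
        (∀ s ∈ Set.Icc (0:ℝ) 1, HasDerivWithinAt γ (γ' s) (Set.Icc 0 1) s) ∧
        ContinuousOn γ' (Set.Icc 0 1) ∧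
        (∀ s ∈ Set.Icc (0:ℝ) 1, γ' s ∈ cone3 θ \ {0}) ∧
        (γ 0 0 = a 0 ∧ γ 0 1 = a 1 ∧ γ 0 2 = 0) ∧
        (γ 1 0 = q 0 ∧ γ 1 1 = q 1 ∧ γ 1 2 = t)} =
    Metric.closedBall p (r + t * Real.tan (θ / 2)) := by
  have hθ2 : θ/2 ∈ Set.Ioo (-(Real.pi/2)) (Real.pi/2) := by
    constructor <;> [linarith [hθ.1, Real.pi_pos]; linarith [hθ.2]]
  have htan : 0 < Real.tan (θ/2) :=
    Real.tan_pos_of_pos_of_lt_pi_div_two (by linarith [hθ.1]) (by linarith [hθ.2])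
  have h01 : (0:ℝ) ≤ 1 := zero_le_one
  ext q
  simp only [Set.mem_setOf_eq, Metric.mem_closedBall]
  constructor
  · rintro ⟨a, ha, γ, γ', hγ, hγ'c, hcone, ⟨h00, h01', h02⟩, ⟨h10, h11, h12⟩⟩
    -- horizontal projection of the curve
    set f : ℝ → EuclideanSpace ℝ (Fin 2) := fun s => P12 (γ s) with hf
    set f' : ℝ → EuclideanSpace ℝ (Fin 2) := fun s => P12 (γ' s) with hf'
    have hfd : ∀ s ∈ Set.Icc (0:ℝ) 1, HasDerivWithinAt f (f' s) (Set.Icc 0 1) s :=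
      fun s hs => (P12.hasFDerivAt).comp_hasDerivWithinAt s (hγ s hs)
    -- vertical coordinate
    set z : ℝ → ℝ := fun s => γ s 2 with hz
    set z' : ℝ → ℝ := fun s => γ' s 2 with hz'
    have hzd : ∀ s ∈ Set.Icc (0:ℝ) 1, HasDerivWithinAt z (z' s) (Set.Icc 0 1) s := by
      intro s hs
      have h := HasFDerivAt.comp_hasDerivWithinAt (l := ⇑(EuclideanSpace.proj (𝕜 := ℝ) (2 : Fin 3)))
        s ((EuclideanSpace.proj (𝕜 := ℝ) (2 : Fin 3)).hasFDerivAt) (hγ s hs)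
      exact h
    have hIcc : Set.uIcc (0:ℝ) 1 = Set.Icc 0 1 := Set.uIcc_of_le h01
    have hint_f' : IntervalIntegrable f' MeasureTheory.volume 0 1 := by
      apply ContinuousOn.intervalIntegrable
      rw [hIcc]; exact P12.continuous.comp_continuousOn hγ'c
    have hint_z' : IntervalIntegrable z' MeasureTheory.volume 0 1 := by
      apply ContinuousOn.intervalIntegrable
      rw [hIcc]
      exact (EuclideanSpace.proj (2 : Fin 3)).continuous.comp_continuousOn hγ'c
    have hftc : ∀ (g : ℝ → EuclideanSpace ℝ (Fin 2)) (g' : ℝ → EuclideanSpace ℝ (Fin 2)),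
        (∀ s ∈ Set.Icc (0:ℝ) 1, HasDerivWithinAt g (g' s) (Set.Icc 0 1) s) →
        IntervalIntegrable g' MeasureTheory.volume 0 1 →
        ∫ s in (0:ℝ)..1, g' s = g 1 - g 0 := by
      intro g g' hg hgi
      refine intervalIntegral.integral_eq_sub_of_hasDeriv_right_of_le h01
        (fun s hs => (hg s hs).continuousWithinAt) (fun x hx => ?_) hgi
      exact ((hg x (Set.Ioo_subset_Icc_self hx)).hasDerivAt
        (Icc_mem_nhds hx.1 hx.2)).hasDerivWithinAt
    have hftcz : ∫ s in (0:ℝ)..1, z' s = z 1 - z 0 := by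
      refine intervalIntegral.integral_eq_sub_of_hasDeriv_right_of_le h01
        (fun s hs => (hzd s hs).continuousWithinAt) (fun x hx => ?_) hint_z'
      exact ((hzd x (Set.Ioo_subset_Icc_self hx)).hasDerivAt
        (Icc_mem_nhds hx.1 hx.2)).hasDerivWithinAt
    have hftcf : ∫ s in (0:ℝ)..1, f' s = f 1 - f 0 := hftc f f' hfd hint_f'
    have hzt : z 1 - z 0 = t := by rw [hz]; simp only []; rw [h12, h02]; ring
    -- pointwise bound ‖f' s‖ ≤ tan * z' s
    have hptw : ∀ s ∈ Set.Icc (0:ℝ) 1, ‖f' s‖ ≤ Real.tan (θ/2) * z' s := by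
      intro s hs
      obtain ⟨_, hb⟩ := cone_bound θ hθ (γ' s) (hcone s hs).1
      have : ‖f' s‖ = Real.sqrt ((γ' s 0)^2 + (γ' s 1)^2) := by
        simp only [hf']; rw [norm2, P12_apply0, P12_apply1]
      rw [this]; exact hb
    have hnorm : ‖f 1 - f 0‖ ≤ Real.tan (θ/2) * t := by
      calc ‖f 1 - f 0‖ = ‖∫ s in (0:ℝ)..1, f' s‖ := by rw [hftcf]
        _ ≤ ∫ s in (0:ℝ)..1, ‖f' s‖ :=
            intervalIntegral.norm_integral_le_integral_norm h01
        _ ≤ ∫ s in (0:ℝ)..1, Real.tan (θ/2) * z' s := by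
            apply intervalIntegral.integral_mono_on h01 hint_f'.norm
              (hint_z'.const_mul _)
            intro s hs; exact hptw s hs
        _ = Real.tan (θ/2) * ∫ s in (0:ℝ)..1, z' s := by
            rw [intervalIntegral.integral_const_mul]
        _ = Real.tan (θ/2) * t := by rw [hftcz, hzt]
    have hfq : f 1 = q := by
      ext i; fin_cases i
      · show P12 (γ 1) 0 = q 0; rw [P12_apply0, h10]
      · show P12 (γ 1) 1 = q 1; rw [P12_apply1, h11]
    have hfa : f 0 = a := by
      ext i; fin_cases i
      · show P12 (γ 0) 0 = a 0; rw [P12_apply0, h00]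
      · show P12 (γ 0) 1 = a 1; rw [P12_apply1, h01']
    have : dist q p ≤ dist q a + dist a p := dist_triangle q a p
    have hqa : dist q a ≤ Real.tan (θ/2) * t := by
      rw [dist_eq_norm, ← hfq, ← hfa]; exact hnorm
    have hap : dist a p ≤ r := ha
    linarith [this, hqa, hap]
  · intro hq
    by_cases hdr : dist q p ≤ r
    · -- start at q itself
      refine ⟨q, hdr, ?_⟩
      apply reach θ hθ t ht q q
      simp [mul_nonneg ht.le htan.le]
    · push_neg at hdr
      set d := dist q p with hd
      have hd0 : 0 < d := lt_of_le_of_lt hr hdr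
      set a := p + (r / d) • (q - p) with ha
      have hqp : ‖q - p‖ = d := by rw [hd, dist_eq_norm]
      have hap : dist a p ≤ r := by
        rw [dist_eq_norm]
        have : a - p = (r / d) • (q - p) := by rw [ha]; abel
        rw [this, norm_smul, Real.norm_eq_abs, abs_of_nonneg (by positivity), hqp]
        rw [div_mul_cancel₀ _ hd0.ne']
      refine ⟨a, hap, ?_⟩
      apply reach θ hθ t ht a q
      have hqa : q - a = (1 - r / d) • (q - p) := by
        rw [ha, sub_smul, one_smul]; abel
      rw [hqa, norm_smul, Real.norm_eq_abs, hqp]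
      have h1 : r / d ≤ 1 := (div_le_one hd0).mpr hdr.le
      rw [abs_of_nonneg (by linarith)]
      have : (1 - r / d) * d = d - r := by field_simp
      rw [this]
      have : d ≤ r + t * Real.tan (θ/2) := hq
      linarith
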